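/- Let b be the barycenter of T₀. For every n ≥ 1: (i) the number of triangles t ∈ Bⁿ(T₀) having b as a vertex equals 3·2ⁿ; (ii) the number of triangles t ∈ Bⁿ(T₀) whose intersection with ∂T₀ consists of exactly one point equals 3(n−1)·2ⁿ; consequently, the total number of triangles in Bⁿ(T₀) that either have a side contained in ∂T₀ or meet ∂T₀ in exactly one point equals 3n·2ⁿ. -/

import Mathlib

/-- A point of the plane. -/
abbrev Pt := ℝ × ℝ

/-- A triangle in the plane: an ordered triple of points. -/
structure Triangle where
  v : Fin 3 → Pt

/-- A triangle is nondegenerate if its vertices are affinely independent. -/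
def Triangle.Nondeg (T : Triangle) : Prop := AffineIndependent ℝ T.v

/-- The barycenter of a triangle. -/
noncomputable def Triangle.bary (T : Triangle) : Pt :=
  (3 : ℝ)⁻¹ • (T.v 0 + T.v 1 + T.v 2)

/-- The child `[aᵢ, (aᵢ+aⱼ)/2, b]` of a triangle produced by barycentric subdivision. -/
noncomputable def Triangle.child (T : Triangle) (i j : Fin 3) : Triangle :=
  ⟨![T.v i, (2 : ℝ)⁻¹ • (T.v i + T.v j), T.bary]⟩

/-- The barycentric subdivision of a triangle: the set of its six children. -/
noncomputable def BSub (T : Triangle) : Set Triangle :=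
  {t | ∃ i j : Fin 3, i ≠ j ∧ t = T.child i j}

/-- `n`-fold iterated barycentric subdivision `Bⁿ(T₀)`. -/
noncomputable def BIter (T₀ : Triangle) : ℕ → Set Triangle
  | 0 => {T₀}
  | n + 1 => ⋃ t ∈ BIter T₀ n, BSub t

/-- The set of sides of a triangle (as subsets of the plane). -/
def Triangle.sides (T : Triangle) : Set (Set Pt) :=
  {e | ∃ i j : Fin 3, i ≠ j ∧ e = segment ℝ (T.v i) (T.v j)}

/-- The boundary of a triangle: the union of its three sides. -/
def Triangle.bdry (T : Triangle) : Set Pt :=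
  segment ℝ (T.v 0) (T.v 1) ∪ segment ℝ (T.v 1) (T.v 2) ∪ segment ℝ (T.v 0) (T.v 2)

/-- Two triangles are adjacent if they are distinct and share a common side. -/
def Adjacent (s t : Triangle) : Prop := s ≠ t ∧ ∃ e, e ∈ s.sides ∧ e ∈ t.sides

/-- The convex hull of a triangle (the triangle viewed as a subset of the plane). -/
def Triangle.hull (T : Triangle) : Set Pt := convexHull ℝ {T.v 0, T.v 1, T.v 2}

/-!
Every triangle of `Bⁿ(T₀)`, `n ≥ 1`, is nondegenerate, has `b` either as a vertex or outside it,
and meets `∂T₀` either along its side `[v₀, v₁]`, or only at its vertex `v₀`, or not at all.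
This propagates from a triangle to its children because, in barycentric coordinates `w` of the
parent, the child `[aᵢ, mᵢⱼ, b]` is `{0 ≤ w_k ≤ w_j ≤ w_i}`. Reading off the six children: a
triangle meeting `∂T₀` along a side has two children of each of the three kinds, one meeting it
at a vertex has two such children and four disjoint from `∂T₀`, and a triangle with vertex `b`
has two children with vertex `b`. Children of distinct triangles have disjoint interiors, so
with `sₙ`, `pₙ`, `cₙ` the three counts, `sₙ₊₁ = 2sₙ`, `pₙ₊₁ = 2(sₙ + pₙ)`, `cₙ₊₁ = 2cₙ`, and
`s₁ = c₁ = 6`, `p₁ = 0`.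
-/

open Finset
open scoped Classical

namespace Fin

lemma eq_or_eq_or_eq_of_ne {i j k : Fin 3} (hij : i ≠ j) (hik : i ≠ k) (hjk : j ≠ k)
    (l : Fin 3) : l = i ∨ l = j ∨ l = k := by
  revert i j k l; decide

lemma forall_fin_three {p : Fin 3 → Prop} : (∀ i, p i) ↔ p 0 ∧ p 1 ∧ p 2 :=
  ⟨fun h => ⟨h 0, h 1, h 2⟩, fun ⟨h0, h1, h2⟩ i => by fin_cases i <;> assumption⟩

lemma exists_ne_and_ne (i j : Fin 3) : ∃ k, i ≠ k ∧ j ≠ k := by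
  revert i j; decide

lemma sum_univ_three_of_ne {M : Type*} [AddCommMonoid M] (f : Fin 3 → M) {i j k : Fin 3}
    (hij : i ≠ j) (hik : i ≠ k) (hjk : j ≠ k) : ∑ l, f l = f i + f j + f k := by
  have huniv : (univ : Finset (Fin 3)) = {i, j, k} := by revert i j k; decide
  rw [huniv, sum_insert (by simp [hij, hik]), sum_pair hjk, add_assoc]

end Fin

lemma AffineMap.apply_add_smul_three {k E F : Type*} [CommRing k] [AddCommGroup E] [Module k E]
    [AddCommGroup F] [Module k F] (f : E →ᵃ[k] F) {a b c : k} (h : a + b + c = 1) (p q r : E) :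
    f (a • p + b • q + c • r) = a • f p + b • f q + c • f r := by
  rw [f.decomp]
  simp only [Pi.add_apply, map_add, map_smul]
  conv_lhs => rw [show f 0 = (a + b + c) • f 0 by rw [h, one_smul]]
  module

namespace Triangle

variable {t : Triangle} {i j k : Fin 3}

lemma hull_eq_convexHull_range (t : Triangle) : t.hull = convexHull ℝ (Set.range t.v) := by
  rw [hull]
  congr 1
  ext x
  simp [Fin.exists_fin_succ, eq_comm]

@[simp] lemma child_v_zero (t : Triangle) (i j : Fin 3) : (t.child i j).v 0 = t.v i := rfl
@[simp] lemma child_v_one (t : Triangle) (i j : Fin 3) :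
    (t.child i j).v 1 = (2 : ℝ)⁻¹ • (t.v i + t.v j) := rfl
@[simp] lemma child_v_two (t : Triangle) (i j : Fin 3) : (t.child i j).v 2 = t.bary := rfl

lemma child_combination (t : Triangle) (hij : i ≠ j) (hik : i ≠ k) (hjk : j ≠ k) (a b c : ℝ) :
    a • (t.child i j).v 0 + b • (t.child i j).v 1 + c • (t.child i j).v 2 =
      (a + b / 2 + c / 3) • t.v i + (b / 2 + c / 3) • t.v j + (c / 3) • t.v k := by
  rw [child_v_zero, child_v_one, child_v_two, bary, ← Fin.sum_univ_three t.v,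
    Fin.sum_univ_three_of_ne t.v hij hik hjk]
  module

lemma vertex_mem_hull (t : Triangle) (l : Fin 3) : t.v l ∈ t.hull := by
  rw [hull_eq_convexHull_range]
  exact subset_convexHull ℝ _ (Set.mem_range_self l)

lemma segment_subset_hull (t : Triangle) (l m : Fin 3) : segment ℝ (t.v l) (t.v m) ⊆ t.hull :=
  (convex_convexHull ℝ _).segment_subset (t.vertex_mem_hull l) (t.vertex_mem_hull m)

namespace Nondeg

noncomputable def basis (ht : t.Nondeg) : AffineBasis (Fin 3) ℝ Pt :=
  ⟨t.v, ht, ht.affineSpan_eq_top_iff_card_eq_finrank_add_one.2 (by simp)⟩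

@[simp] lemma coe_basis (ht : t.Nondeg) : ⇑ht.basis = t.v := rfl

lemma hull_eq (ht : t.Nondeg) : t.hull = {x | ∀ l, 0 ≤ ht.basis.coord l x} := by
  rw [hull_eq_convexHull_range, ← ht.coe_basis, AffineBasis.convexHull_eq_nonneg_coord]

lemma interior_hull_eq (ht : t.Nondeg) : interior t.hull = {x | ∀ l, 0 < ht.basis.coord l x} := by
  rw [hull_eq_convexHull_range, ← ht.coe_basis, AffineBasis.interior_convexHull]

lemma coord_add_smul_three (ht : t.Nondeg) (hij : i ≠ j) (hik : i ≠ k) (hjk : j ≠ k) {a b c : ℝ}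
    (habc : a + b + c = 1) :
    ht.basis.coord i (a • t.v i + b • t.v j + c • t.v k) = a ∧
      ht.basis.coord j (a • t.v i + b • t.v j + c • t.v k) = b ∧
      ht.basis.coord k (a • t.v i + b • t.v j + c • t.v k) = c := by
  simp only [(ht.basis.coord _).apply_add_smul_three habc, ← ht.coe_basis,
    AffineBasis.coord_apply, smul_eq_mul]
  simp [hij, hik, hjk, hij.symm, hik.symm, hjk.symm]

lemma child (ht : t.Nondeg) (hij : i ≠ j) : (t.child i j).Nondeg := by
  obtain ⟨k, hik, hjk⟩ := Fin.exists_ne_and_ne i j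
  rw [Nondeg, affineIndependent_iff_of_fintype]
  intro w hw hcomb
  rw [Finset.weightedVSub_eq_linear_combination _ hw, Fin.sum_univ_three,
    child_combination t hij hik hjk] at hcomb
  rw [Fin.sum_univ_three] at hw
  -- shifting the vanishing combination by `t.v i` gives a second barycentric expression of `t.v i`
  have hvi : t.v i = (1 + (w 0 + w 1 / 2 + w 2 / 3)) • t.v i + (w 1 / 2 + w 2 / 3) • t.v j +
      (w 2 / 3) • t.v k := by
    rw [add_smul, one_smul, add_assoc, add_assoc, ← add_assoc _ (_ • t.v j), hcomb, add_zero]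
  obtain ⟨hi, hj, hk⟩ := ht.coord_add_smul_three hij hik hjk (a := 1 + (w 0 + w 1 / 2 + w 2 / 3))
    (b := w 1 / 2 + w 2 / 3) (c := w 2 / 3) (by linarith)
  rw [← hvi, ← ht.coe_basis, AffineBasis.coord_apply_ne _ hij.symm] at hj
  rw [← hvi, ← ht.coe_basis, AffineBasis.coord_apply_ne _ hik.symm] at hk
  exact Fin.forall_fin_three.2 ⟨by linarith, by linarith, by linarith⟩

lemma coord_eq_child_coord (ht : t.Nondeg) (hij : i ≠ j) (hik : i ≠ k) (hjk : j ≠ k) (x : Pt) :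
    ht.basis.coord i x = (ht.child hij).basis.coord 0 x + (ht.child hij).basis.coord 1 x / 2 +
        (ht.child hij).basis.coord 2 x / 3 ∧
      ht.basis.coord j x = (ht.child hij).basis.coord 1 x / 2 +
        (ht.child hij).basis.coord 2 x / 3 ∧
      ht.basis.coord k x = (ht.child hij).basis.coord 2 x / 3 := by
  set c := (ht.child hij).basis.coord
  have hsum : c 0 x + c 1 x + c 2 x = 1 := by
    rw [← Fin.sum_univ_three (c · x), AffineBasis.sum_coord_apply_eq_one]
  have hx := (ht.child hij).basis.linear_combination_coord_eq_self x
  rw [Fin.sum_univ_three, coe_basis, child_combination t hij hik hjk] at hx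
  have := ht.coord_add_smul_three hij hik hjk (a := c 0 x + c 1 x / 2 + c 2 x / 3)
    (b := c 1 x / 2 + c 2 x / 3) (c := c 2 x / 3) (by linarith)
  rwa [hx] at this

lemma mem_child_hull_iff (ht : t.Nondeg) (hij : i ≠ j) (hik : i ≠ k) (hjk : j ≠ k) {x : Pt} :
    x ∈ (t.child i j).hull ↔ 0 ≤ ht.basis.coord k x ∧
      ht.basis.coord k x ≤ ht.basis.coord j x ∧ ht.basis.coord j x ≤ ht.basis.coord i x := by
  obtain ⟨hi, hj, hk⟩ := ht.coord_eq_child_coord hij hik hjk x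
  rw [(ht.child hij).hull_eq, Set.mem_ofPred_eq, Fin.forall_fin_three, hi, hj, hk]
  constructor <;> rintro ⟨h0, h1, h2⟩ <;> refine ⟨?_, ?_, ?_⟩ <;> linarith

lemma mem_interior_child_hull_iff (ht : t.Nondeg) (hij : i ≠ j) (hik : i ≠ k) (hjk : j ≠ k)
    {x : Pt} :
    x ∈ interior (t.child i j).hull ↔ 0 < ht.basis.coord k x ∧
      ht.basis.coord k x < ht.basis.coord j x ∧ ht.basis.coord j x < ht.basis.coord i x := by
  obtain ⟨hi, hj, hk⟩ := ht.coord_eq_child_coord hij hik hjk x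
  rw [(ht.child hij).interior_hull_eq, Set.mem_ofPred_eq, Fin.forall_fin_three, hi,
    hj, hk]
  constructor <;> rintro ⟨h0, h1, h2⟩ <;> refine ⟨?_, ?_, ?_⟩ <;> linarith

lemma child_hull_subset (ht : t.Nondeg) (hij : i ≠ j) : (t.child i j).hull ⊆ t.hull := by
  obtain ⟨k, hik, hjk⟩ := Fin.exists_ne_and_ne i j
  intro x hx
  rw [ht.mem_child_hull_iff hij hik hjk] at hx
  rw [ht.hull_eq]
  intro l
  rcases Fin.eq_or_eq_or_eq_of_ne hij hik hjk l with rfl | rfl | rfl <;> linarith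

lemma bary_mem_interior (ht : t.Nondeg) : t.bary ∈ interior t.hull := by
  have hb : t.bary = (3⁻¹ : ℝ) • t.v 0 + (3⁻¹ : ℝ) • t.v 1 + (3⁻¹ : ℝ) • t.v 2 := by
    rw [bary, smul_add, smul_add]
  obtain ⟨h0, h1, h2⟩ := ht.coord_add_smul_three (i := 0) (j := 1) (k := 2) (by decide)
    (by decide) (by decide) (a := 3⁻¹) (b := 3⁻¹) (c := 3⁻¹) (by norm_num)
  rw [← hb] at h0 h1 h2
  rw [ht.interior_hull_eq, Set.mem_ofPred_eq, Fin.forall_fin_three, h0, h1, h2]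
  norm_num

lemma child_hull_inter_side (ht : t.Nondeg) (hij : i ≠ j) (hik : i ≠ k) (hjk : j ≠ k) :
    (t.child i j).hull ∩ segment ℝ (t.v i) (t.v j) =
      segment ℝ ((t.child i j).v 0) ((t.child i j).v 1) := by
  refine subset_antisymm ?_ (Set.subset_inter (segment_subset_hull _ 0 1) ?_)
  · rintro _ ⟨hx, a, b, ha, hb, hab, rfl⟩
    have hx' : a • t.v i + b • t.v j = a • t.v i + b • t.v j + (0 : ℝ) • t.v k := by simp
    obtain ⟨hi, hj, -⟩ := ht.coord_add_smul_three hij hik hjk (a := a) (b := b) (c := 0)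
      (by linarith)
    rw [ht.mem_child_hull_iff hij hik hjk, hx', hi, hj] at hx
    exact ⟨a - b, 2 * b, by linarith, by linarith, by linarith, by
      simp only [child_v_zero, child_v_one]; module⟩
  · refine (convex_segment _ _).segment_subset (left_mem_segment ℝ _ _) ?_
    exact ⟨2⁻¹, 2⁻¹, by norm_num, by norm_num, by norm_num, by simp⟩

lemma child_hull_inter_adjacent_side (ht : t.Nondeg) (hij : i ≠ j) (hik : i ≠ k)
    (hjk : j ≠ k) : (t.child i j).hull ∩ segment ℝ (t.v i) (t.v k) = {t.v i} := by
  refine subset_antisymm ?_ (Set.singleton_subset_iff.2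
    ⟨(t.child i j).vertex_mem_hull 0, left_mem_segment ℝ _ _⟩)
  rintro _ ⟨hx, a, b, ha, hb, hab, rfl⟩
  have hx' : a • t.v i + b • t.v k = a • t.v i + (0 : ℝ) • t.v j + b • t.v k := by simp
  obtain ⟨-, hj, hk⟩ := ht.coord_add_smul_three hij hik hjk (a := a) (b := 0) (c := b)
    (by linarith)
  rw [ht.mem_child_hull_iff hij hik hjk, hx', hj, hk] at hx
  obtain rfl : b = 0 := by linarith
  obtain rfl : a = 1 := by linarith
  simp

lemma child_hull_inter_opposite_side (ht : t.Nondeg) (hij : i ≠ j) (hik : i ≠ k)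
    (hjk : j ≠ k) : (t.child i j).hull ∩ segment ℝ (t.v j) (t.v k) = ∅ := by
  refine Set.eq_empty_of_forall_notMem ?_
  rintro _ ⟨hx, a, b, ha, hb, hab, rfl⟩
  have hx' : a • t.v j + b • t.v k = (0 : ℝ) • t.v i + a • t.v j + b • t.v k := by simp
  obtain ⟨hi, hj, hk⟩ := ht.coord_add_smul_three hij hik hjk (a := 0) (b := a) (c := b)
    (by linarith)
  rw [ht.mem_child_hull_iff hij hik hjk, hx', hi, hj, hk] at hx
  linarith

lemma vertex_notMem_child_hull (ht : t.Nondeg) (hij : i ≠ j) {l : Fin 3} (hl : l ≠ i) :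
    t.v l ∉ (t.child i j).hull := by
  obtain ⟨k, hik, hjk⟩ := Fin.exists_ne_and_ne i j
  rcases Fin.eq_or_eq_or_eq_of_ne hij hik hjk l with rfl | rfl | rfl
  · exact (hl rfl).elim
  · exact fun h => (ht.child_hull_inter_opposite_side hij hik hjk).subset
      ⟨h, left_mem_segment ℝ _ _⟩
  · exact fun h => hl (ht.injective ((ht.child_hull_inter_adjacent_side hij hik hjk).subset
      ⟨h, right_mem_segment ℝ _ _⟩))

lemma disjoint_interior_child (ht : t.Nondeg) {i' j' : Fin 3} (hij : i ≠ j) (hij' : i' ≠ j')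
    (hne : (i, j) ≠ (i', j')) :
    Disjoint (interior (t.child i j).hull) (interior (t.child i' j').hull) := by
  obtain ⟨k, hik, hjk⟩ := Fin.exists_ne_and_ne i j
  obtain ⟨k', hik', hjk'⟩ := Fin.exists_ne_and_ne i' j'
  refine Set.disjoint_left.2 fun x hx hx' => hne ?_
  rw [ht.mem_interior_child_hull_iff hij hik hjk] at hx
  rw [ht.mem_interior_child_hull_iff hij' hik' hjk'] at hx'
  -- the strict ordering `w i > w j > w k` of the coordinates of `x` determines `(i, j)`
  rcases Fin.eq_or_eq_or_eq_of_ne hij hik hjk i' with rfl | rfl | rfl <;>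
    rcases Fin.eq_or_eq_or_eq_of_ne hij hik hjk j' with rfl | rfl | rfl <;>
    rcases Fin.eq_or_eq_or_eq_of_ne hij hik hjk k' with rfl | rfl | rfl <;>
    first | rfl | (exfalso; linarith)

lemma child_injective (ht : t.Nondeg) :
    Function.Injective fun p : Fin 3 × Fin 3 => t.child p.1 p.2 := by
  rintro ⟨i, j⟩ ⟨i', j'⟩ h
  have h0 := congrArg (fun s => s.v 0) h
  have h1 := congrArg (fun s => s.v 1) h
  simp only [child_v_zero, child_v_one] at h0 h1
  rw [h0, smul_right_injective Pt (by norm_num : (2 : ℝ)⁻¹ ≠ 0) |>.eq_iff, add_right_inj] at h1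
  rw [ht.injective h0, ht.injective h1]

end Nondeg

lemma segment_zero_one_eq (t : Triangle) (hij : i ≠ j) (hik : i ≠ k) (hjk : j ≠ k)
    (hk : k = 2) : segment ℝ (t.v 0) (t.v 1) = segment ℝ (t.v i) (t.v j) := by
  obtain ⟨rfl, rfl⟩ | ⟨rfl, rfl⟩ : (i = 0 ∧ j = 1) ∨ (i = 1 ∧ j = 0) := by
    subst hk; revert i j; decide
  · rfl
  · exact segment_symm ℝ _ _

lemma bdry_eq_of_ne (t : Triangle) (hij : i ≠ j) (hik : i ≠ k) (hjk : j ≠ k) :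
    t.bdry =
      segment ℝ (t.v i) (t.v j) ∪ segment ℝ (t.v i) (t.v k) ∪ segment ℝ (t.v j) (t.v k) := by
  fin_cases i <;> fin_cases j <;> fin_cases k <;>
    simp only [ne_eq, not_true_eq_false] at hij hik hjk <;> ext x <;>
    simp only [Fin.zero_eta, Fin.mk_one, Fin.reduceFinMk, bdry, Set.mem_union,
      segment_symm ℝ (t.v 1) (t.v 0), segment_symm ℝ (t.v 2) (t.v 0),
      segment_symm ℝ (t.v 2) (t.v 1)] <;>
    tauto

lemma Nondeg.child_hull_inter_bdry (ht : t.Nondeg) (hij : i ≠ j) :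
    (t.child i j).hull ∩ t.bdry = segment ℝ ((t.child i j).v 0) ((t.child i j).v 1) := by
  obtain ⟨k, hik, hjk⟩ := Fin.exists_ne_and_ne i j
  rw [t.bdry_eq_of_ne hij hik hjk, Set.inter_union_distrib_left, Set.inter_union_distrib_left,
    ht.child_hull_inter_side hij hik hjk, ht.child_hull_inter_adjacent_side hij hik hjk,
    ht.child_hull_inter_opposite_side hij hik hjk, Set.union_empty, Set.union_eq_left]
  exact Set.singleton_subset_iff.2 (left_mem_segment ℝ _ _)

lemma Nondeg.child_hull_inter (ht : t.Nondeg) (hij : i ≠ j) (D : Set Pt) :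
    (t.child i j).hull ∩ D = (t.child i j).hull ∩ (t.hull ∩ D) := by
  rw [← Set.inter_assoc, Set.inter_eq_left.2 (ht.child_hull_subset hij)]

def MeetsAlongSide (D : Set Pt) (t : Triangle) : Prop :=
  t.hull ∩ D = segment ℝ (t.v 0) (t.v 1)

def MeetsAtVertex (D : Set Pt) (t : Triangle) : Prop :=
  t.hull ∩ D = {t.v 0}

variable {D : Set Pt}

lemma MeetsAlongSide.inter_nonempty (h : t.MeetsAlongSide D) : (t.hull ∩ D).Nonempty :=
  h ▸ ⟨_, left_mem_segment ℝ _ _⟩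

lemma MeetsAtVertex.inter_nonempty (h : t.MeetsAtVertex D) : (t.hull ∩ D).Nonempty :=
  h ▸ Set.singleton_nonempty _

lemma Nondeg.inter_ne_singleton (ht : t.Nondeg) (h : t.MeetsAlongSide D) (p : Pt) :
    t.hull ∩ D ≠ {p} := by
  intro hp
  have h0 : t.v 0 ∈ t.hull ∩ D := h ▸ left_mem_segment ℝ _ _
  have h1 : t.v 1 ∈ t.hull ∩ D := h ▸ right_mem_segment ℝ _ _
  rw [hp] at h0 h1
  exact absurd (ht.injective (h1.trans h0.symm)) (by decide)

lemma Nondeg.child_of_meetsAlongSide (ht : t.Nondeg) (hij : i ≠ j) (hik : i ≠ k) (hjk : j ≠ k)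
    (h : t.MeetsAlongSide D) :
    (k = 2 → (t.child i j).MeetsAlongSide D) ∧ (j = 2 → (t.child i j).MeetsAtVertex D) ∧
      (i = 2 → (t.child i j).hull ∩ D = ∅) := by
  unfold MeetsAlongSide at h
  simp only [MeetsAlongSide, MeetsAtVertex, ht.child_hull_inter hij D, h]
  refine ⟨fun hk => ?_, fun hj => ?_, fun hi => ?_⟩
  · rw [t.segment_zero_one_eq hij hik hjk hk, ht.child_hull_inter_side hij hik hjk]
  · rw [t.segment_zero_one_eq hik hij hjk.symm hj, ht.child_hull_inter_adjacent_side hij hik hjk,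
      child_v_zero]
  · rw [t.segment_zero_one_eq hjk hij.symm hik.symm hi,
      ht.child_hull_inter_opposite_side hij hik hjk]

lemma Nondeg.child_of_meetsAtVertex (ht : t.Nondeg) (hij : i ≠ j) (h : t.MeetsAtVertex D) :
    (i = 0 → (t.child i j).MeetsAtVertex D) ∧ (i ≠ 0 → (t.child i j).hull ∩ D = ∅) := by
  unfold MeetsAtVertex at h
  simp only [MeetsAtVertex, ht.child_hull_inter hij D, h]
  refine ⟨fun hi => ?_, fun hi => ?_⟩
  · subst hi
    exact Set.inter_eq_right.2 (Set.singleton_subset_iff.2 ((t.child 0 j).vertex_mem_hull 0))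
  · exact Set.inter_singleton_eq_empty.2 (ht.vertex_notMem_child_hull hij (Ne.symm hi))

lemma Nondeg.child_of_inter_eq_empty (ht : t.Nondeg) (hij : i ≠ j) (h : t.hull ∩ D = ∅) :
    (t.child i j).hull ∩ D = ∅ := by
  rw [ht.child_hull_inter hij D, h, Set.inter_empty]

structure Adapted (D : Set Pt) (b : Pt) (t : Triangle) : Prop where
  nondeg : t.Nondeg
  vertex_or_not_mem : (∃ l, t.v l = b) ∨ b ∉ t.hull
  contact : t.MeetsAlongSide D ∨ t.MeetsAtVertex D ∨ t.hull ∩ D = ∅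

variable {b : Pt}

lemma Nondeg.adapted_child (ht : t.Nondeg) (hij : i ≠ j) : (t.child i j).Adapted t.bdry t.bary :=
  ⟨ht.child hij, .inl ⟨2, rfl⟩, .inl (ht.child_hull_inter_bdry hij)⟩

namespace Adapted

lemma child (h : t.Adapted D b) (hij : i ≠ j) : (t.child i j).Adapted D b := by
  obtain ⟨k, hik, hjk⟩ := Fin.exists_ne_and_ne i j
  have ht := h.nondeg
  refine ⟨ht.child hij, ?_, ?_⟩
  · rcases h.vertex_or_not_mem with ⟨l, rfl⟩ | hb
    · by_cases hl : l = i
      · exact .inl ⟨0, by rw [child_v_zero, hl]⟩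
      · exact .inr (ht.vertex_notMem_child_hull hij hl)
    · exact .inr fun hb' => hb (ht.child_hull_subset hij hb')
  · rcases h.contact with hS | hV | hN
    · obtain ⟨hk, hj, hi⟩ := ht.child_of_meetsAlongSide hij hik hjk hS
      rcases Fin.eq_or_eq_or_eq_of_ne hij hik hjk 2 with h2 | h2 | h2
      exacts [.inr (.inr (hi h2.symm)), .inr (.inl (hj h2.symm)), .inl (hk h2.symm)]
    · obtain ⟨hi, hi'⟩ := ht.child_of_meetsAtVertex hij hV
      by_cases h0 : i = 0
      exacts [.inr (.inl (hi h0)), .inr (.inr (hi' h0))]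
    · exact .inr (.inr (ht.child_of_inter_eq_empty hij hN))

lemma exists_vertex_eq_child_iff (h : t.Adapted D b) (hij : i ≠ j) :
    (∃ l, (t.child i j).v l = b) ↔ t.v i = b := by
  refine ⟨fun ⟨l, hl⟩ => ?_, fun hi => ⟨0, hi⟩⟩
  have hmem : b ∈ (t.child i j).hull := hl ▸ (t.child i j).vertex_mem_hull l
  rcases h.vertex_or_not_mem with ⟨m, rfl⟩ | hb
  · by_contra hm
    exact h.nondeg.vertex_notMem_child_hull hij (fun hmi => hm (hmi ▸ rfl)) hmem
  · exact (hb (h.nondeg.child_hull_subset hij hmem)).elim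

lemma child_meetsAlongSide_iff (h : t.Adapted D b) (hij : i ≠ j) :
    (t.child i j).MeetsAlongSide D ↔ t.MeetsAlongSide D ∧ i ≠ 2 ∧ j ≠ 2 := by
  obtain ⟨k, hik, hjk⟩ := Fin.exists_ne_and_ne i j
  have ht := h.nondeg
  have hc := ht.child hij
  rcases h.contact with hS | hV | hN
  · obtain ⟨hk, hj, hi⟩ := ht.child_of_meetsAlongSide hij hik hjk hS
    rcases Fin.eq_or_eq_or_eq_of_ne hij hik hjk 2 with rfl | rfl | rfl
    · simp only [ne_eq, not_true_eq_false, false_and, and_false, iff_false]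
      exact fun hS' => hS'.inter_nonempty.ne_empty (hi rfl)
    · simp only [ne_eq, not_true_eq_false, and_false, iff_false]
      exact fun hS' => hc.inter_ne_singleton hS' _ (hj rfl)
    · exact iff_of_true (hk rfl) ⟨hS, hik, hjk⟩
  · refine iff_of_false (fun hS' => ?_) fun hS => ht.inter_ne_singleton hS.1 _ hV
    by_cases h0 : i = 0
    · exact hc.inter_ne_singleton hS' _ ((ht.child_of_meetsAtVertex hij hV).1 h0)
    · exact hS'.inter_nonempty.ne_empty ((ht.child_of_meetsAtVertex hij hV).2 h0)
  · exact iff_of_false (fun hS' => hS'.inter_nonempty.ne_empty (ht.child_of_inter_eq_empty hij hN))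
      fun hS => hS.1.inter_nonempty.ne_empty hN

lemma child_meetsAtVertex_iff (h : t.Adapted D b) (hij : i ≠ j) :
    (t.child i j).MeetsAtVertex D ↔ t.MeetsAlongSide D ∧ j = 2 ∨ t.MeetsAtVertex D ∧ i = 0 := by
  obtain ⟨k, hik, hjk⟩ := Fin.exists_ne_and_ne i j
  have ht := h.nondeg
  have hc := ht.child hij
  rcases h.contact with hS | hV | hN
  · have hV : ¬ t.MeetsAtVertex D := ht.inter_ne_singleton hS _
    obtain ⟨hk, hj, hi⟩ := ht.child_of_meetsAlongSide hij hik hjk hS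
    simp only [hS, hV, true_and, false_and, or_false]
    rcases Fin.eq_or_eq_or_eq_of_ne hij hik hjk 2 with rfl | rfl | rfl
    · exact iff_of_false (fun hV' => hV'.inter_nonempty.ne_empty (hi rfl)) hij.symm
    · exact iff_of_true (hj rfl) rfl
    · exact iff_of_false (hc.inter_ne_singleton (hk rfl) _) hjk
  · have hS : ¬ t.MeetsAlongSide D := fun hS => ht.inter_ne_singleton hS _ hV
    obtain ⟨hi, hi'⟩ := ht.child_of_meetsAtVertex hij hV
    simp only [hS, hV, true_and, false_and, false_or]
    by_cases h0 : i = 0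
    · exact iff_of_true (hi h0) h0
    · exact iff_of_false (fun hV' => hV'.inter_nonempty.ne_empty (hi' h0)) h0
  · refine iff_of_false (fun hV' => hV'.inter_nonempty.ne_empty
      (ht.child_of_inter_eq_empty hij hN)) ?_
    rintro (⟨hS, -⟩ | ⟨hV, -⟩)
    exacts [hS.inter_nonempty.ne_empty hN, hV.inter_nonempty.ne_empty hN]

end Adapted

noncomputable def children (t : Triangle) : Finset Triangle :=
  univ.offDiag.image fun p : Fin 3 × Fin 3 => t.child p.1 p.2

lemma coe_children (t : Triangle) : (t.children : Set Triangle) = BSub t := by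
  ext c
  simp [children, BSub, eq_comm]

lemma Nondeg.card_filter_children (ht : t.Nondeg) (q : Triangle → Prop) [DecidablePred q]
    (P : Fin 3 × Fin 3 → Prop) [DecidablePred P]
    (h : ∀ i j : Fin 3, i ≠ j → (q (t.child i j) ↔ P (i, j))) :
    #(t.children.filter q) = #(univ.offDiag.filter P) := by
  rw [children, filter_image, card_image_of_injective _ ht.child_injective]
  refine congrArg card (filter_congr fun p hp => ?_)
  exact h p.1 p.2 (mem_offDiag.1 hp).2.2

lemma Nondeg.pairwiseDisjoint_interior_children (ht : t.Nondeg) :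
    (t.children : Set Triangle).PairwiseDisjoint fun c => interior c.hull := by
  simp only [children, coe_image]
  rintro _ ⟨⟨i, j⟩, hp, rfl⟩ _ ⟨⟨i', j'⟩, hp', rfl⟩ hne
  exact ht.disjoint_interior_child (mem_offDiag.1 hp).2.2 (mem_offDiag.1 hp').2.2
    fun h => hne (h ▸ rfl)

lemma Nondeg.interior_hull_subset_of_mem_children (ht : t.Nondeg) {c : Triangle}
    (hc : c ∈ t.children) : interior c.hull ⊆ interior t.hull := by
  obtain ⟨⟨i, j⟩, hp, rfl⟩ := mem_image.1 hc
  exact interior_mono (ht.child_hull_subset (mem_offDiag.1 hp).2.2)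

lemma Nondeg.nondeg_of_mem_children (ht : t.Nondeg) {c : Triangle} (hc : c ∈ t.children) :
    c.Nondeg := by
  obtain ⟨⟨i, j⟩, hp, rfl⟩ := mem_image.1 hc
  exact ht.child (mem_offDiag.1 hp).2.2

lemma Nondeg.adapted_of_mem_children (ht : t.Nondeg) {c : Triangle} (hc : c ∈ t.children) :
    c.Adapted t.bdry t.bary := by
  obtain ⟨⟨i, j⟩, hp, rfl⟩ := mem_image.1 hc
  exact ht.adapted_child (mem_offDiag.1 hp).2.2

namespace Adapted

lemma exists_side_subset_iff (h : t.Adapted D b) :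
    (∃ e ∈ t.sides, e ⊆ D) ↔ t.MeetsAlongSide D := by
  refine ⟨fun ⟨_, ⟨i, j, hij, he⟩, hsub⟩ => ?_, fun hS => ⟨_, ⟨0, 1, by decide, rfl⟩,
    hS ▸ Set.inter_subset_right⟩⟩
  have hside : segment ℝ (t.v i) (t.v j) ⊆ t.hull ∩ D :=
    Set.subset_inter (t.segment_subset_hull i j) (he ▸ hsub)
  rcases h.contact with hS | hV | hN
  · exact hS
  · rw [hV] at hside
    exact absurd (h.nondeg.injective ((hside (left_mem_segment ℝ _ _)).trans
      (hside (right_mem_segment ℝ _ _)).symm)) hij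
  · have hvi := hside (left_mem_segment ℝ (t.v i) (t.v j))
    rw [hN] at hvi
    exact hvi.elim

lemma exists_inter_eq_singleton_iff (h : t.Adapted D b) :
    (∃ p, t.hull ∩ D = {p}) ↔ t.MeetsAtVertex D := by
  refine ⟨fun ⟨p, hp⟩ => ?_, fun hV => ⟨_, hV⟩⟩
  rcases h.contact with hS | hV | hN
  · exact absurd hp (h.nondeg.inter_ne_singleton hS p)
  · exact hV
  · exact absurd (hN ▸ hp) (Set.singleton_ne_empty p).symm

lemma of_mem_children (h : t.Adapted D b) {c : Triangle} (hc : c ∈ t.children) :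
    c.Adapted D b := by
  obtain ⟨⟨i, j⟩, hp, rfl⟩ := mem_image.1 hc
  exact h.child (mem_offDiag.1 hp).2.2

lemma card_children_filter_exists_vertex_eq (h : t.Adapted D b) :
    #(t.children.filter fun c => ∃ l, c.v l = b) = if ∃ l, t.v l = b then 2 else 0 := by
  rw [h.nondeg.card_filter_children _ (fun p => t.v p.1 = b)
    fun i j hij => h.exists_vertex_eq_child_iff hij]
  split_ifs with hb
  · obtain ⟨m, rfl⟩ := hb
    simp only [h.nondeg.injective.eq_iff]
    have hcount : ∀ m : Fin 3, #(univ.offDiag.filter fun p : Fin 3 × Fin 3 => p.1 = m) = 2 := by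
      decide
    exact hcount m
  · simp only [not_exists] at hb
    simp [hb]

lemma card_children_filter_meetsAlongSide (h : t.Adapted D b) :
    #(t.children.filter (MeetsAlongSide D)) = if t.MeetsAlongSide D then 2 else 0 := by
  rw [h.nondeg.card_filter_children _ (fun p => t.MeetsAlongSide D ∧ p.1 ≠ 2 ∧ p.2 ≠ 2)
    fun i j hij => h.child_meetsAlongSide_iff hij]
  split_ifs with hS
  · simp only [hS, true_and]
    decide
  · simp [hS]

lemma card_children_filter_meetsAtVertex (h : t.Adapted D b) :
    #(t.children.filter (MeetsAtVertex D)) =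
      if t.MeetsAlongSide D ∨ t.MeetsAtVertex D then 2 else 0 := by
  rw [h.nondeg.card_filter_children _
    (fun p => t.MeetsAlongSide D ∧ p.2 = 2 ∨ t.MeetsAtVertex D ∧ p.1 = 0)
    fun i j hij => h.child_meetsAtVertex_iff hij]
  by_cases hS : t.MeetsAlongSide D
  · have hV : ¬ t.MeetsAtVertex D := h.nondeg.inter_ne_singleton hS _
    simp only [hS, hV, true_and, false_and, or_false, if_true]
    decide
  · by_cases hV : t.MeetsAtVertex D
    · simp only [hS, hV, true_and, false_and, false_or, or_true, if_true]
      decide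
    · simp [hS, hV]

end Adapted

end Triangle

open Triangle

noncomputable def BIterFinset (T₀ : Triangle) : ℕ → Finset Triangle
  | 0 => {T₀}
  | n + 1 => (BIterFinset T₀ n).biUnion children

lemma coe_BIterFinset (T₀ : Triangle) (n : ℕ) :
    (BIterFinset T₀ n : Set Triangle) = BIter T₀ n := by
  induction n with
  | zero => simp [BIterFinset, BIter]
  | succ n ih => simp [BIterFinset, BIter, ← ih, coe_children]

variable {T₀ : Triangle}

lemma nondeg_of_mem_BIterFinset (hT₀ : T₀.Nondeg) {n : ℕ} {t : Triangle}
    (ht : t ∈ BIterFinset T₀ n) : t.Nondeg := by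
  induction n generalizing t with
  | zero => exact (mem_singleton.1 ht) ▸ hT₀
  | succ n ih =>
    obtain ⟨s, hs, hts⟩ := mem_biUnion.1 ht
    exact (ih hs).nondeg_of_mem_children hts

lemma adapted_of_mem_BIterFinset (hT₀ : T₀.Nondeg) {n : ℕ} {t : Triangle}
    (ht : t ∈ BIterFinset T₀ (n + 1)) : t.Adapted T₀.bdry T₀.bary := by
  induction n generalizing t with
  | zero =>
    obtain ⟨s, hs, hts⟩ := mem_biUnion.1 ht
    obtain rfl := mem_singleton.1 hs
    exact hT₀.adapted_of_mem_children hts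
  | succ n ih =>
    obtain ⟨s, hs, hts⟩ := mem_biUnion.1 ht
    exact (ih hs).of_mem_children hts

lemma pairwiseDisjoint_interior_BIterFinset (hT₀ : T₀.Nondeg) (n : ℕ) :
    (BIterFinset T₀ n : Set Triangle).PairwiseDisjoint fun t => interior t.hull := by
  induction n with
  | zero => simp [BIterFinset]
  | succ n ih =>
    rw [BIterFinset, coe_biUnion]
    refine Set.PairwiseDisjoint.biUnion_finset (ih.mono_on fun t ht => ?_) fun t ht =>
      (nondeg_of_mem_BIterFinset hT₀ ht).pairwiseDisjoint_interior_children
    exact Finset.sup_le fun c hc =>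
      (nondeg_of_mem_BIterFinset hT₀ ht).interior_hull_subset_of_mem_children hc

lemma pairwiseDisjoint_children_BIterFinset (hT₀ : T₀.Nondeg) (n : ℕ) :
    (BIterFinset T₀ n : Set Triangle).PairwiseDisjoint children := by
  intro t ht t' ht' hne
  refine Finset.disjoint_left.2 fun c hc hc' => ?_
  have hb := ((nondeg_of_mem_BIterFinset hT₀ ht).nondeg_of_mem_children hc).bary_mem_interior
  exact Set.disjoint_left.1 (pairwiseDisjoint_interior_BIterFinset hT₀ n ht ht' hne)
    ((nondeg_of_mem_BIterFinset hT₀ ht).interior_hull_subset_of_mem_children hc hb)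
    ((nondeg_of_mem_BIterFinset hT₀ ht').interior_hull_subset_of_mem_children hc' hb)

lemma card_filter_BIterFinset_succ (hT₀ : T₀.Nondeg) (q : Triangle → Prop) [DecidablePred q]
    (n : ℕ) :
    #((BIterFinset T₀ (n + 1)).filter q) = ∑ t ∈ BIterFinset T₀ n, #(t.children.filter q) := by
  rw [BIterFinset, filter_biUnion, card_biUnion]
  exact (pairwiseDisjoint_children_BIterFinset hT₀ n).mono fun t => filter_subset _ _

lemma card_filter_meetsAlongSide_or_meetsAtVertex (hT₀ : T₀.Nondeg) (n : ℕ) :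
    #((BIterFinset T₀ (n + 1)).filter fun t =>
        t.MeetsAlongSide T₀.bdry ∨ t.MeetsAtVertex T₀.bdry) =
      #((BIterFinset T₀ (n + 1)).filter (MeetsAlongSide T₀.bdry)) +
        #((BIterFinset T₀ (n + 1)).filter (MeetsAtVertex T₀.bdry)) := by
  rw [filter_or]
  exact card_union_of_disjoint (disjoint_filter.2 fun t ht hS =>
    (adapted_of_mem_BIterFinset hT₀ ht).nondeg.inter_ne_singleton hS _)

lemma card_filter_BIterFinset (hT₀ : T₀.Nondeg) (n : ℕ) :
    #((BIterFinset T₀ (n + 1)).filter fun t => ∃ l, t.v l = T₀.bary) = 3 * 2 ^ (n + 1) ∧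
      #((BIterFinset T₀ (n + 1)).filter (MeetsAlongSide T₀.bdry)) = 3 * 2 ^ (n + 1) ∧
      #((BIterFinset T₀ (n + 1)).filter (MeetsAtVertex T₀.bdry)) = 3 * n * 2 ^ (n + 1) := by
  induction n with
  | zero =>
    refine ⟨?_, ?_, ?_⟩ <;> rw [card_filter_BIterFinset_succ hT₀] <;>
      simp only [BIterFinset, sum_singleton]
    · rw [hT₀.card_filter_children _ (fun _ => True) fun i j _ => iff_of_true ⟨2, rfl⟩ trivial]
      decide
    · rw [hT₀.card_filter_children _ (fun _ => True)
        fun i j hij => iff_of_true (hT₀.child_hull_inter_bdry hij) trivial]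
      decide
    · rw [hT₀.card_filter_children (MeetsAtVertex T₀.bdry) (fun _ => False) fun i j hij =>
        iff_of_false ((hT₀.child hij).inter_ne_singleton (hT₀.child_hull_inter_bdry hij) _) id]
      simp
  | succ n ih =>
    obtain ⟨hB, hS, hV⟩ := ih
    have hA {t : Triangle} (ht : t ∈ BIterFinset T₀ (n + 1)) := adapted_of_mem_BIterFinset hT₀ ht
    refine ⟨?_, ?_, ?_⟩
    · rw [card_filter_BIterFinset_succ hT₀,
        sum_congr rfl fun t ht => (hA ht).card_children_filter_exists_vertex_eq, ← sum_filter,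
        sum_const, smul_eq_mul, hB]
      ring
    · rw [card_filter_BIterFinset_succ hT₀,
        sum_congr rfl fun t ht => (hA ht).card_children_filter_meetsAlongSide, ← sum_filter,
        sum_const, smul_eq_mul, hS]
      ring
    · rw [card_filter_BIterFinset_succ hT₀,
        sum_congr rfl fun t ht => (hA ht).card_children_filter_meetsAtVertex, ← sum_filter,
        sum_const, smul_eq_mul, card_filter_meetsAlongSide_or_meetsAtVertex hT₀, hS, hV]
      ring

lemma ncard_setOf_mem_BIter (T₀ : Triangle) (n : ℕ) (q : Triangle → Prop) [DecidablePred q] :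
    {t ∈ BIter T₀ n | q t}.ncard = #((BIterFinset T₀ n).filter q) := by
  rw [← coe_BIterFinset, ← Set.ncard_coe_finset, coe_filter]
  rfl

/-- for `n ≥ 1`: (i) exactly `3·2ⁿ` triangles of `Bⁿ(T₀)` have the
barycenter `b` of `T₀` as a vertex; (ii) exactly `3(n−1)·2ⁿ` triangles of `Bⁿ(T₀)` meet
`∂T₀` in exactly one point; and consequently (iii) exactly `3n·2ⁿ` triangles of
`Bⁿ(T₀)` either have a side contained in `∂T₀` or meet `∂T₀` in exactly one point. -/
theorem stmt19 (T₀ : Triangle) (hT₀ : T₀.Nondeg) (n : ℕ) (hn : 1 ≤ n) :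
    {t ∈ BIter T₀ n | ∃ i : Fin 3, t.v i = T₀.bary}.ncard = 3 * 2 ^ n ∧
    {t ∈ BIter T₀ n | ∃ p : Pt, t.hull ∩ T₀.bdry = {p}}.ncard = 3 * (n - 1) * 2 ^ n ∧
    {t ∈ BIter T₀ n |
        (∃ e ∈ t.sides, e ⊆ T₀.bdry) ∨ ∃ p : Pt, t.hull ∩ T₀.bdry = {p}}.ncard
      = 3 * n * 2 ^ n := by
  obtain ⟨m, rfl⟩ : ∃ m, n = m + 1 := ⟨n - 1, by omega⟩
  obtain ⟨hB, hS, hV⟩ := card_filter_BIterFinset hT₀ m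
  have hA {t : Triangle} (ht : t ∈ BIterFinset T₀ (m + 1)) := adapted_of_mem_BIterFinset hT₀ ht
  simp only [ncard_setOf_mem_BIter]
  rw [filter_congr fun t ht => (hA ht).exists_inter_eq_singleton_iff,
    filter_congr fun t ht => or_congr (hA ht).exists_side_subset_iff
      (hA ht).exists_inter_eq_singleton_iff,
    card_filter_meetsAlongSide_or_meetsAtVertex hT₀, hB, hS, hV]
  exact ⟨rfl, by simp, by ring⟩
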